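/- arXiv:1003.1178 — 3 statements merged into one kernel-verified Lean document; each statement's English description precedes it below -/
import Mathlib

section
/- Let A ∈ M_2(ℂ[z]) be a matrix of polynomials with entries a_1,a_2,a_3,a_4 (row-major), λ ∈ ℂ nonzero, and suppose there exists a nonzero B ∈ M_2(ℂ[z]) solving the linear matrix ODE λ B' + [A,B] = 0 where B' denotes entry-wise differentiation, such that the solution space (over ℂ) of this equation has dimension 4. If (a_1−a_4)^2 + 4 a_2 a_3 = 0 then the matrices B_1, B_2, B_3, B_4 given by the explicit polynomial formulas (with entries polynomial in z of degree ≤ 2, coefficients rational in λ and the a_i evaluated as constants) satisfy λ B_i' + [A,B_i] = 0; in particular, when a_1,…,a_4 are constants with (a_1−a_4)^2+4a_2a_3=0, the space of polynomial solutions B has dimension at least 4. -/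
open Polynomial

/-- The constant coefficient matrix `A = [[a₁,a₂],[a₃,a₄]]`, viewed in `M_2(ℂ[z])`. -/
noncomputable def odeA (a₁ a₂ a₃ a₄ : ℂ) : Matrix (Fin 2) (Fin 2) (Polynomial ℂ) :=
  !![C a₁, C a₂; C a₃, C a₄]

/-- The first fundamental solution `B₁` of `λB' + [A,B] = 0`. -/
noncomputable def odeB₁ (lam a₁ a₂ a₃ a₄ : ℂ) : Matrix (Fin 2) (Fin 2) (Polynomial ℂ) :=
  !![1 + C (lam⁻¹ ^ 2 * a₂ * a₃) * X ^ 2,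
     C (lam⁻¹ * a₂) * X - C (2⁻¹ * lam⁻¹ ^ 2 * (a₁ - a₄) * a₂) * X ^ 2;
     -(C (lam⁻¹ * a₃) * X) - C (2⁻¹ * lam⁻¹ ^ 2 * (a₁ - a₄) * a₃) * X ^ 2,
     -(C (lam⁻¹ ^ 2 * a₂ * a₃) * X ^ 2)]

/-- The second fundamental solution `B₂` of `λB' + [A,B] = 0`. -/
noncomputable def odeB₂ (lam a₁ a₂ a₃ a₄ : ℂ) : Matrix (Fin 2) (Fin 2) (Polynomial ℂ) :=
  !![C (lam⁻¹ * a₃) * X - C (2⁻¹ * lam⁻¹ ^ 2 * (a₁ - a₄) * a₃) * X ^ 2,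
     1 - C (lam⁻¹ * (a₁ - a₄)) * X - C (lam⁻¹ ^ 2 * a₂ * a₃) * X ^ 2;
     -(C (lam⁻¹ ^ 2 * a₃ ^ 2) * X ^ 2),
     -(C (lam⁻¹ * a₃) * X) + C (2⁻¹ * lam⁻¹ ^ 2 * (a₁ - a₄) * a₃) * X ^ 2]

/-- The third fundamental solution `B₃` of `λB' + [A,B] = 0`. -/
noncomputable def odeB₃ (lam a₁ a₂ a₃ a₄ : ℂ) : Matrix (Fin 2) (Fin 2) (Polynomial ℂ) :=
  !![-(C (lam⁻¹ * a₂) * X) - C (2⁻¹ * lam⁻¹ ^ 2 * (a₁ - a₄) * a₂) * X ^ 2,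
     -(C (lam⁻¹ ^ 2 * a₂ ^ 2) * X ^ 2);
     1 + C (lam⁻¹ * (a₁ - a₄)) * X - C (lam⁻¹ ^ 2 * a₂ * a₃) * X ^ 2,
     C (lam⁻¹ * a₂) * X + C (2⁻¹ * lam⁻¹ ^ 2 * (a₁ - a₄) * a₂) * X ^ 2]

/-- The fourth fundamental solution `B₄` of `λB' + [A,B] = 0`. -/
noncomputable def odeB₄ (lam a₁ a₂ a₃ a₄ : ℂ) : Matrix (Fin 2) (Fin 2) (Polynomial ℂ) :=
  !![-(C (lam⁻¹ ^ 2 * a₂ * a₃) * X ^ 2),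
     -(C (lam⁻¹ * a₂) * X) + C (2⁻¹ * lam⁻¹ ^ 2 * (a₁ - a₄) * a₂) * X ^ 2;
     C (lam⁻¹ * a₃) * X + C (2⁻¹ * lam⁻¹ ^ 2 * (a₁ - a₄) * a₃) * X ^ 2,
     1 + C (lam⁻¹ ^ 2 * a₂ * a₃) * X ^ 2]


section OdeAux
open Polynomial

private lemma odeSol_of_key (lam a₁ a₂ a₃ a₄ : ℂ) (hlam : lam ≠ 0)
    (hdisc : (a₁ - a₄) ^ 2 + 4 * a₂ * a₃ = 0)
    (B M : Matrix (Fin 2) (Fin 2) (Polynomial ℂ))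
    (hkey : B.map (fun p => derivative p) +
        lam⁻¹ • (odeA a₁ a₂ a₃ a₄ * B - B * odeA a₁ a₂ a₃ a₄) =
      ((a₁ - a₄) ^ 2 + 4 * a₂ * a₃) • M) :
    lam • B.map (fun p => derivative p) +
      (odeA a₁ a₂ a₃ a₄ * B - B * odeA a₁ a₂ a₃ a₄) = 0 := by
  have h2 := congrArg (fun N => lam • N) hkey
  simp only [smul_add, smul_smul, mul_inv_cancel₀ hlam, one_smul] at h2
  rw [hdisc, mul_zero, zero_smul] at h2
  exact h2

set_option maxHeartbeats 2000000 in
private lemma odeKey₁ (lam a₁ a₂ a₃ a₄ : ℂ) :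
    (odeB₁ lam a₁ a₂ a₃ a₄).map (fun p => derivative p) +
        lam⁻¹ • (odeA a₁ a₂ a₃ a₄ * odeB₁ lam a₁ a₂ a₃ a₄ -
          odeB₁ lam a₁ a₂ a₃ a₄ * odeA a₁ a₂ a₃ a₄) =
      ((a₁ - a₄) ^ 2 + 4 * a₂ * a₃) •
        !![0, -(C (2⁻¹ * lam⁻¹ ^ 3 * a₂) * X ^ 2); C (2⁻¹ * lam⁻¹ ^ 3 * a₃) * X ^ 2, 0] := by
  refine Matrix.ext fun i j => ?_
  fin_cases i <;> fin_cases j <;>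
  · refine Polynomial.funext fun x => ?_
    simp [odeA, odeB₁, Matrix.mul_apply, Fin.sum_univ_two, smul_eq_C_mul, derivative_pow]
    ring

set_option maxHeartbeats 2000000 in
private lemma odeKey₂ (lam a₁ a₂ a₃ a₄ : ℂ) :
    (odeB₂ lam a₁ a₂ a₃ a₄).map (fun p => derivative p) +
        lam⁻¹ • (odeA a₁ a₂ a₃ a₄ * odeB₂ lam a₁ a₂ a₃ a₄ -
          odeB₂ lam a₁ a₂ a₃ a₄ * odeA a₁ a₂ a₃ a₄) =
      ((a₁ - a₄) ^ 2 + 4 * a₂ * a₃) •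
        !![0, -(C (lam⁻¹ ^ 2) * X); 0, 0] := by
  refine Matrix.ext fun i j => ?_
  fin_cases i <;> fin_cases j <;>
  · refine Polynomial.funext fun x => ?_
    simp [odeA, odeB₂, Matrix.mul_apply, Fin.sum_univ_two, smul_eq_C_mul, derivative_pow]
    ring

set_option maxHeartbeats 2000000 in
private lemma odeKey₃ (lam a₁ a₂ a₃ a₄ : ℂ) :
    (odeB₃ lam a₁ a₂ a₃ a₄).map (fun p => derivative p) +
        lam⁻¹ • (odeA a₁ a₂ a₃ a₄ * odeB₃ lam a₁ a₂ a₃ a₄ -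
          odeB₃ lam a₁ a₂ a₃ a₄ * odeA a₁ a₂ a₃ a₄) =
      ((a₁ - a₄) ^ 2 + 4 * a₂ * a₃) •
        !![0, 0; -(C (lam⁻¹ ^ 2) * X), 0] := by
  refine Matrix.ext fun i j => ?_
  fin_cases i <;> fin_cases j <;>
  · refine Polynomial.funext fun x => ?_
    simp [odeA, odeB₃, Matrix.mul_apply, Fin.sum_univ_two, smul_eq_C_mul, derivative_pow]
    ring

set_option maxHeartbeats 2000000 in
private lemma odeKey₄ (lam a₁ a₂ a₃ a₄ : ℂ) :
    (odeB₄ lam a₁ a₂ a₃ a₄).map (fun p => derivative p) +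
        lam⁻¹ • (odeA a₁ a₂ a₃ a₄ * odeB₄ lam a₁ a₂ a₃ a₄ -
          odeB₄ lam a₁ a₂ a₃ a₄ * odeA a₁ a₂ a₃ a₄) =
      ((a₁ - a₄) ^ 2 + 4 * a₂ * a₃) •
        !![0, C (2⁻¹ * lam⁻¹ ^ 3 * a₂) * X ^ 2; -(C (2⁻¹ * lam⁻¹ ^ 3 * a₃) * X ^ 2), 0] := by
  refine Matrix.ext fun i j => ?_
  fin_cases i <;> fin_cases j <;>
  · refine Polynomial.funext fun x => ?_
    simp [odeA, odeB₄, Matrix.mul_apply, Fin.sum_univ_two, smul_eq_C_mul, derivative_pow]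
    ring

end OdeAux

/-- If the constant matrix `A` with entries `a₁, a₂, a₃, a₄` satisfies
`(a₁ − a₄)² + 4a₂a₃ = 0` and `λ ≠ 0`, then the four explicit matrices
`B₁, B₂, B₃, B₄` all solve the linear matrix ODE `λ B' + [A,B] = 0`
(where `B'` is the entry-wise formal derivative), and they are linearly
independent over ℂ; in particular the space of polynomial solutions has
dimension at least `4`. -/
theorem odeB_fundamental_solutions (lam a₁ a₂ a₃ a₄ : ℂ) (hlam : lam ≠ 0)
    (hdisc : (a₁ - a₄) ^ 2 + 4 * a₂ * a₃ = 0) :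
    (∀ B ∈ ({odeB₁ lam a₁ a₂ a₃ a₄, odeB₂ lam a₁ a₂ a₃ a₄,
             odeB₃ lam a₁ a₂ a₃ a₄, odeB₄ lam a₁ a₂ a₃ a₄} :
        Set (Matrix (Fin 2) (Fin 2) (Polynomial ℂ))),
      lam • B.map (fun p => derivative p) +
        (odeA a₁ a₂ a₃ a₄ * B - B * odeA a₁ a₂ a₃ a₄) = 0) ∧
    LinearIndependent ℂ
      ![odeB₁ lam a₁ a₂ a₃ a₄, odeB₂ lam a₁ a₂ a₃ a₄,
        odeB₃ lam a₁ a₂ a₃ a₄, odeB₄ lam a₁ a₂ a₃ a₄] := by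
  constructor
  · intro B hB
    simp only [Set.mem_insert_iff, Set.mem_singleton_iff] at hB
    rcases hB with rfl | rfl | rfl | rfl
    · exact odeSol_of_key lam a₁ a₂ a₃ a₄ hlam hdisc _ _ (odeKey₁ lam a₁ a₂ a₃ a₄)
    · exact odeSol_of_key lam a₁ a₂ a₃ a₄ hlam hdisc _ _ (odeKey₂ lam a₁ a₂ a₃ a₄)
    · exact odeSol_of_key lam a₁ a₂ a₃ a₄ hlam hdisc _ _ (odeKey₃ lam a₁ a₂ a₃ a₄)
    · exact odeSol_of_key lam a₁ a₂ a₃ a₄ hlam hdisc _ _ (odeKey₄ lam a₁ a₂ a₃ a₄)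
  · rw [Fintype.linearIndependent_iff]
    intro g hg
    have h00 := congrArg (fun M : Matrix (Fin 2) (Fin 2) (Polynomial ℂ) => (M 0 0).coeff 0) hg
    have h01 := congrArg (fun M : Matrix (Fin 2) (Fin 2) (Polynomial ℂ) => (M 0 1).coeff 0) hg
    have h10 := congrArg (fun M : Matrix (Fin 2) (Fin 2) (Polynomial ℂ) => (M 1 0).coeff 0) hg
    have h11 := congrArg (fun M : Matrix (Fin 2) (Fin 2) (Polynomial ℂ) => (M 1 1).coeff 0) hg
    simp [Fin.sum_univ_four, odeB₁, odeB₂, odeB₃, odeB₄, Matrix.add_apply, Matrix.smul_apply,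
      coeff_add, coeff_smul, coeff_C_mul, coeff_X_pow, coeff_one, smul_eq_mul] at h00 h01 h10 h11
    intro i
    fin_cases i <;> assumption
end

section
/- Let A ∈ M_2(ℂ) be a constant matrix with entries a_1,a_2,a_3,a_4 satisfying (a_1−a_4)^2 + 4 a_2 a_3 = 0 (i.e. A has a repeated eigenvalue). Let λ ≠ 0 and let B ∈ M_2(ℂ[z]) be any polynomial solution of λ B' + [A,B] = 0. Then the characteristic polynomial of B (as a polynomial in an auxiliary variable v with coefficients in ℂ[z]) is identical to the characteristic polynomial of its constant term B(0); in particular trace(B) and det(B) are constant polynomials. -/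
open Polynomial

private lemma charpoly_fin_two' {R : Type*} [CommRing R] (M : Matrix (Fin 2) (Fin 2) R) :
    M.charpoly = X ^ 2 - C M.trace * X + C M.det := by
  rw [Matrix.charpoly, Matrix.det_fin_two]
  simp [Matrix.charmatrix_apply, Matrix.trace_fin_two, Matrix.det_fin_two,
    Matrix.one_apply, Matrix.diagonal_apply]
  ring

/-- Let `A ∈ M_2(ℂ)` be a constant matrix whose entries satisfy
`(a₁ − a₄)² + 4a₂a₃ = 0` (a repeated eigenvalue), let `λ ≠ 0`, and let
`B ∈ M_2(ℂ[z])` be any polynomial solution of `λB' + [A,B] = 0` (entry-wise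
formal differentiation).  Then the characteristic polynomial of `B` coincides
with that of its constant term `B(0)` (with coefficients viewed in `ℂ[z]` via `C`);
in particular `trace B` and `det B` are constant polynomials. -/
theorem charpoly_of_ode_solution_constant (lam : ℂ) (hlam : lam ≠ 0)
    (A : Matrix (Fin 2) (Fin 2) ℂ)
    (hdisc : (A 0 0 - A 1 1) ^ 2 + 4 * A 0 1 * A 1 0 = 0)
    (B : Matrix (Fin 2) (Fin 2) (Polynomial ℂ))
    (hODE : lam • B.map (fun p => derivative p) +
      (A.map (fun a => C a) * B - B * A.map (fun a => C a)) = 0) :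
    B.charpoly = ((B.map (fun p => eval 0 p)).charpoly).map (C : ℂ →+* Polynomial ℂ) ∧
    B.trace = C (B.map (fun p => eval 0 p)).trace ∧
    B.det = C (B.map (fun p => eval 0 p)).det := by
  have key : ∀ i j, C lam * derivative (B i j) +
      ((C (A i 0) * B 0 j + C (A i 1) * B 1 j)
        - (B i 0 * C (A 0 j) + B i 1 * C (A 1 j))) = 0 := by
    intro i j
    have h := congrFun (congrFun hODE i) j
    simpa [Matrix.add_apply, Matrix.smul_apply, Matrix.sub_apply, Matrix.mul_apply,
      Matrix.map_apply, Fin.sum_univ_two, Polynomial.smul_eq_C_mul] using h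
  have hC : (C lam : Polynomial ℂ) ≠ 0 := by simpa using hlam
  have htr : derivative B.trace = 0 := by
    have h : C lam * derivative B.trace = 0 := by
      rw [Matrix.trace_fin_two, derivative_add]
      linear_combination key 0 0 + key 1 1
    exact (mul_eq_zero.mp h).resolve_left hC
  have hdet : derivative B.det = 0 := by
    have h : C lam * derivative B.det = 0 := by
      rw [Matrix.det_fin_two, derivative_sub, derivative_mul, derivative_mul]
      linear_combination B 1 1 * key 0 0 + B 0 0 * key 1 1
        - B 1 0 * key 0 1 - B 0 1 * key 1 0
    exact (mul_eq_zero.mp h).resolve_left hC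
  have const : ∀ p : Polynomial ℂ, derivative p = 0 → p = C (eval 0 p) := by
    intro p hp
    have h0 := Polynomial.natDegree_eq_zero_of_derivative_eq_zero hp
    rw [Polynomial.eq_C_of_natDegree_eq_zero h0]
    simp
  have h1 : B.trace = C ((B.map (fun p => eval 0 p)).trace) := by
    have h := const B.trace htr
    rw [h]
    congr 1
    simp [Matrix.trace_fin_two, Matrix.map_apply]
  have h2 : B.det = C ((B.map (fun p => eval 0 p)).det) := by
    have h := const B.det hdet
    rw [h]
    congr 1
    simp [Matrix.det_fin_two, Matrix.map_apply]
  refine ⟨?_, h1, h2⟩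
  rw [charpoly_fin_two', charpoly_fin_two']
  simp [Polynomial.map_add, Polynomial.map_sub, Polynomial.map_mul, Polynomial.map_pow,
    h1, h2]
end

section
/- Let c: S → X be a finite covering map of smooth manifolds and g: S → Y a smooth map to a complex manifold. Then there is a dense open subset U ⊆ X such that c^{-1}(U) is dense open in S and the restrictions of the induced maps to the surrogate over U are covering maps; more precisely, for (c,g): S → X×Y and X_φ := (c,g)(S) with induced maps h: S → X_φ and π: X_φ → X, there is a dense open U ⊆ X over which both h and π restrict to covering maps. -/
/-!
Over an open set `W` on which `c` is trivial, the surrogate is the union of the graphs of the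
finitely many branches of the multivalued function `g ∘ c⁻¹`. If any two branches either agree on
all of `W` or are apart (no point of one graph lies in the closure of the other), then `π` is
trivial over `W`, with one sheet per class of equal branches, and `h` is trivial over each of these
sheets. For two continuous branches with values in the locally Hausdorff space `Y`, every
nonempty open set contains a nonempty open set on which they agree or are apart; shrinking once
per pair of branches gives such a `W` inside any open set, and `U` is the union of all of them.
-/

open scoped Manifold
open Set Filter Topology

section EvenlyCovered

variable {E X ι : Type*} [TopologicalSpace E] [TopologicalSpace X] [TopologicalSpace ι]
  {f : E → X} {U : Set X}

theorem IsEvenlyCovered.of_sections [DiscreteTopology ι] (hf : Continuous f) (hU : IsOpen U)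
    {I : Set ι} {κ : E → ι} (hκ : ContinuousOn κ (f ⁻¹' U)) (hκI : MapsTo κ (f ⁻¹' U) I)
    {σ : ι → X → E} (hσ : ∀ i ∈ I, ContinuousOn (σ i) U) (hfσ : ∀ i ∈ I, ∀ x ∈ U, f (σ i x) = x)
    (hκσ : ∀ i ∈ I, ∀ x ∈ U, κ (σ i x) = i) (hσκ : ∀ e, f e ∈ U → σ (κ e) (f e) = e)
    {x : X} (hx : x ∈ U) : IsEvenlyCovered f x (f ⁻¹' {x}) :=
  IsEvenlyCovered.to_isEvenlyCovered_preimage (I := I) ⟨inferInstance, U, hx, hU, hU.preimage hf,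
    { toFun e := (⟨f e, e.2⟩, ⟨κ e, hκI e.2⟩)
      invFun p := ⟨σ p.2 p.1, by simp only [mem_preimage, hfσ _ p.2.2 _ p.1.2, p.1.2]⟩
      left_inv e := Subtype.ext (hσκ e e.2)
      right_inv p :=
        Prod.ext (Subtype.ext (hfσ _ p.2.2 _ p.1.2)) (Subtype.ext (hκσ _ p.2.2 _ p.1.2))
      continuous_toFun := by
        refine .prodMk (.subtype_mk (hf.comp continuous_subtype_val) _) (.subtype_mk ?_ _)
        exact hκ.domRestrict
      continuous_invFun := continuous_prod_of_discrete_right.mpr fun i =>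
        .subtype_mk (hσ i i.2).domRestrict _ }, fun _ => rfl⟩

theorem IsCoveringMapOn.of_preimage_eq_empty (hU : IsOpen U) (h : f ⁻¹' U = ∅) :
    IsCoveringMapOn f U := fun _ hx =>
  (IsEvenlyCovered.of_preimage_eq_empty Empty (hU.mem_nhds hx) h).to_isEvenlyCovered_preimage

end EvenlyCovered

section Apart

variable {X Y ι : Type*} [TopologicalSpace X] [TopologicalSpace Y] {f₁ f₂ : X → Y} {x : X}
  {V W : Set X}

/-- The point `(x, f₁ x)` lies outside the closure of the graph of `f₂`. -/
def ApartAt (f₁ f₂ : X → Y) (x : X) : Prop := ∀ᶠ z in 𝓝 (x, f₁ x), z.2 ≠ f₂ z.1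

def EqOnOrApartOn (f₁ f₂ : X → Y) (W : Set X) : Prop := EqOn f₁ f₂ W ∨ ∀ x ∈ W, ApartAt f₁ f₂ x

theorem ApartAt.ne (h : ApartAt f₁ f₂ x) : f₁ x ≠ f₂ x := h.self_of_nhds

theorem ApartAt.eventually (hf₁ : ContinuousAt f₁ x) (h : ApartAt f₁ f₂ x) :
    ∀ᶠ x' in 𝓝 x, ApartAt f₁ f₂ x' :=
  (continuousAt_id.prodMk hf₁).eventually h.eventually_nhds

theorem apartAt_of_disjoint_nhds (hf₂ : ContinuousAt f₂ x)
    (h : Disjoint (𝓝 (f₁ x)) (𝓝 (f₂ x))) : ApartAt f₁ f₂ x := by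
  obtain ⟨A, hA, B, hB, hAB⟩ := Filter.disjoint_iff.mp h
  have hsnd : ∀ᶠ z in 𝓝 (x, f₁ x), z.2 ∈ A := continuousAt_snd.eventually_mem hA
  have hfst : ∀ᶠ z in 𝓝 (x, f₁ x), f₂ z.1 ∈ B :=
    (hf₂.comp continuousAt_fst).eventually_mem hB
  filter_upwards [hsnd, hfst] with z hzA hzB heq
  exact hAB.ne_of_mem hzA hzB heq

theorem EqOnOrApartOn.mono (h : EqOnOrApartOn f₁ f₂ W) (hVW : V ⊆ W) : EqOnOrApartOn f₁ f₂ V :=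
  h.imp (fun h => h.mono hVW) fun h x hx => h x (hVW hx)

theorem EqOnOrApartOn.eqOn_of_eq (h : EqOnOrApartOn f₁ f₂ W) (hx : x ∈ W) (heq : f₁ x = f₂ x) :
    EqOn f₁ f₂ W :=
  h.resolve_right fun hap => (hap x hx).ne heq

theorem eq_of_not_disjoint_nhds_of_mem_chart_source {H : Type*} [TopologicalSpace H] [T2Space H]
    [ChartedSpace H Y] {y y₁ y₂ : Y} (h₁ : y₁ ∈ (chartAt H y).source)
    (h₂ : y₂ ∈ (chartAt H y).source) (h : ¬Disjoint (𝓝 y₁) (𝓝 y₂)) : y₁ = y₂ := by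
  refine (chartAt H y).injOn h₁ h₂ (by_contra fun hne => h ?_)
  exact (Filter.disjoint_comap (disjoint_nhds_nhds.mpr hne)).mono
    ((chartAt H y).continuousAt h₁).tendsto.le_comap
    ((chartAt H y).continuousAt h₂).tendsto.le_comap

theorem exists_isOpen_subset_eqOnOrApartOn (H : Type*) [TopologicalSpace H] [T2Space H]
    [ChartedSpace H Y] (hV : IsOpen V) (hne : V.Nonempty) (h₁ : ContinuousOn f₁ V)
    (h₂ : ContinuousOn f₂ V) : ∃ W ⊆ V, IsOpen W ∧ W.Nonempty ∧ EqOnOrApartOn f₁ f₂ W := by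
  by_cases hap : ∃ x ∈ V, ApartAt f₁ f₂ x
  · obtain ⟨x, hxV, hx⟩ := hap
    obtain ⟨W, hWap, hWo, hxW⟩ :=
      eventually_nhds_iff.mp (hx.eventually (h₁.continuousAt (hV.mem_nhds hxV)))
    exact ⟨W ∩ V, inter_subset_right, hWo.inter hV, ⟨x, hxW, hxV⟩,
      Or.inr fun x' hx' => hWap x' hx'.1⟩
  -- Nowhere apart, `f₁` and `f₂` agree wherever both lie in one chart, which is Hausdorff;
  -- such points exist near any point of `V`.
  push Not at hap
  obtain ⟨x, hxV⟩ := hne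
  set C := (chartAt H (f₁ x)).source
  have hC : IsOpen C := (chartAt H (f₁ x)).open_source
  have hCx : C ∈ 𝓝 (f₁ x) := hC.mem_nhds (mem_chart_source H _)
  have hfreq : ∃ᶠ z in 𝓝 (x, f₁ x), z.2 = f₂ z.1 := by
    simpa only [ApartAt, not_eventually, not_not] using hap x hxV
  have hnear : ∀ᶠ z in 𝓝 (x, f₁ x), z.1 ∈ V ∧ f₁ z.1 ∈ C ∧ z.2 ∈ C :=
    (continuousAt_fst.eventually_mem (hV.mem_nhds hxV)).and
      (((h₁.continuousAt (hV.mem_nhds hxV)).comp continuousAt_fst).eventually_mem hCx |>.and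
        (continuousAt_snd.eventually_mem hCx))
  obtain ⟨z, ⟨hzV, hz₁, hz₂⟩, hz⟩ := (hnear.and_frequently hfreq).exists
  refine ⟨V ∩ f₁ ⁻¹' C ∩ f₂ ⁻¹' C, fun x' hx' => hx'.1.1,
    (h₂.mono inter_subset_left).isOpen_inter_preimage (h₁.isOpen_inter_preimage hV hC) hC,
    ⟨z.1, ⟨hzV, hz₁⟩, show f₂ z.1 ∈ C from hz ▸ hz₂⟩, Or.inl ?_⟩
  rintro x' ⟨⟨hx'V, hx'₁⟩, hx'₂⟩
  refine eq_of_not_disjoint_nhds_of_mem_chart_source hx'₁ hx'₂ fun hdisj => hap x' hx'V ?_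
  exact apartAt_of_disjoint_nhds (h₂.continuousAt (hV.mem_nhds hx'V)) hdisj

theorem exists_isOpen_subset_pairwise_eqOnOrApartOn (H : Type*) [TopologicalSpace H] [T2Space H]
    [ChartedSpace H Y] [Finite ι] {f : ι → X → Y} (hV : IsOpen V) (hne : V.Nonempty)
    (hf : ∀ k, ContinuousOn (f k) V) :
    ∃ W ⊆ V, IsOpen W ∧ W.Nonempty ∧ ∀ k l, EqOnOrApartOn (f k) (f l) W := by
  classical
  have := Fintype.ofFinite ι
  suffices ∀ s : Finset (ι × ι), ∃ W ⊆ V, IsOpen W ∧ W.Nonempty ∧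
      ∀ p ∈ s, EqOnOrApartOn (f p.1) (f p.2) W by
    obtain ⟨W, hWV, hWo, hWne, hW⟩ := this Finset.univ
    exact ⟨W, hWV, hWo, hWne, fun k l => hW (k, l) (Finset.mem_univ _)⟩
  intro s
  induction s using Finset.induction_on with
  | empty => exact ⟨V, subset_rfl, hV, hne, by simp⟩
  | insert p s _ ih =>
    obtain ⟨W, hWV, hWo, hWne, hW⟩ := ih
    obtain ⟨W', hW'W, hW'o, hW'ne, hW'⟩ := exists_isOpen_subset_eqOnOrApartOn H hWo hWne
      ((hf p.1).mono hWV) ((hf p.2).mono hWV)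
    refine ⟨W', hW'W.trans hWV, hW'o, hW'ne, (Finset.forall_mem_insert _ _ _).mpr
      ⟨hW', fun q hq => (hW q hq).mono hW'W⟩⟩

theorem isOpen_setOf_fst_mem_and_snd_eq [Finite ι] {T : Set (X × Y)} {f : ι → X → Y}
    (hW : IsOpen W) (hT : ∀ p ∈ T, p.1 ∈ W → ∃ k, p.2 = f k p.1)
    (hf : ∀ k l, EqOnOrApartOn (f k) (f l) W) (k : ι) :
    IsOpen {p : T | p.1.1 ∈ W ∧ p.1.2 = f k p.1.1} := by
  refine isOpen_iff_mem_nhds.mpr fun p hp => ?_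
  have hp' : (p : X × Y) = (p.1.1, f k p.1.1) := Prod.ext rfl hp.2
  have hbranch : ∀ l, ∀ᶠ z in 𝓝 (p : X × Y), z.1 ∈ W → z.2 = f l z.1 → z.2 = f k z.1 := by
    intro l
    rcases hf k l with heq | hap
    · exact .of_forall fun z hz hzl => hzl.trans (heq hz).symm
    · rw [hp']
      exact (hap _ hp.1).mono fun z hne _ hzl => absurd hzl hne
  have hWnear : ∀ᶠ z in 𝓝 (p : X × Y), z.1 ∈ W := continuousAt_fst.eventually_mem (hW.mem_nhds hp.1)
  filter_upwards [continuous_subtype_val.continuousAt.eventually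
    (hWnear.and (eventually_all.mpr hbranch))] with q ⟨hqW, hq⟩
  obtain ⟨l, hl⟩ := hT q q.2 hqW
  exact ⟨hqW, hq l hqW hl⟩

end Apart

namespace Bundle.Trivialization

variable {S X Y ι : Type*} [TopologicalSpace S] [TopologicalSpace X] [TopologicalSpace ι]
  {c : S → X} {g : S → Y} {W : Set X}

/-- The `k`-th branch of the multivalued function `g ∘ c⁻¹` over the base of `t`. -/
def branch (t : Trivialization ι c) (g : S → Y) (k : ι) (x : X) : Y :=
  g (t.toOpenPartialHomeomorph.symm (x, k))

variable (t : Trivialization ι c)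

theorem continuousOn_branch [TopologicalSpace Y] (hg : Continuous g) (k : ι) :
    ContinuousOn (t.branch g k) t.baseSet :=
  hg.comp_continuousOn t.continuousOn_symm_prodMk_left

theorem apply_eq_branch {s : S} (hs : c s ∈ t.baseSet) : g s = t.branch g (t s).2 (c s) := by
  rw [branch, t.symm_apply_mk_proj (t.mem_source.mpr hs)]

theorem exists_snd_eq_branch (hW : W ⊆ t.baseSet) :
    ∀ p ∈ range (fun s => (c s, g s)), p.1 ∈ W → ∃ k, p.2 = t.branch g k p.1 := by
  rintro _ ⟨s, rfl⟩ hs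
  exact ⟨_, t.apply_eq_branch (hW hs)⟩

theorem coe_rangeFactorization_symm {x : X} (hx : x ∈ t.baseSet) (k : ι) :
    (rangeFactorization (fun s => (c s, g s)) (t.toOpenPartialHomeomorph.symm (x, k)) : X × Y) =
      (x, t.branch g k x) :=
  Prod.ext (t.proj_symm_apply' hx) rfl

theorem isCoveringMapOn_fst_range [TopologicalSpace Y] [Finite ι] [DiscreteTopology ι]
    (hc : Continuous c) (hg : Continuous g) (hW : IsOpen W) (hWt : W ⊆ t.baseSet)
    (hbranches : ∀ k l, EqOnOrApartOn (t.branch g k) (t.branch g l) W) :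
    IsCoveringMapOn (fun p : range (fun s => (c s, g s)) => (p : X × Y).1) W := by
  let r : Setoid ι := ⟨fun k l => EqOn (t.branch g k) (t.branch g l) W,
    ⟨fun _ => eqOn_refl _ _, EqOn.symm, EqOn.trans⟩⟩
  choose s hs using fun p : range (fun s => (c s, g s)) => p.2
  have hs_branch : ∀ p : range (fun s => (c s, g s)), p.1.1 ∈ W →
      p.1.2 = t.branch g (t (s p)).2 p.1.1 := by
    intro p hp
    rw [← hs p] at hp ⊢
    exact t.apply_eq_branch (hWt hp)
  -- a canonical representative of the class of branches through `p`
  let κ : range (fun s => (c s, g s)) → ι := fun p => (Quotient.mk r (t (s p)).2).out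
  have hκ_eq : ∀ p : range (fun s => (c s, g s)), p.1.1 ∈ W → ∀ k,
      p.1.2 = t.branch g k p.1.1 → κ p = (Quotient.mk r k).out := fun p hp k hk =>
    congrArg Quotient.out (Quotient.sound
      ((hbranches _ _).eqOn_of_eq hp ((hs_branch p hp).symm.trans hk)))
  have hh : Continuous (rangeFactorization fun s => (c s, g s)) :=
    (hc.prodMk hg).subtype_mk _
  refine fun x hx => IsEvenlyCovered.of_sections (continuous_fst.comp continuous_subtype_val) hW
    (I := range (Quotient.out : Quotient r → ι)) (κ := κ) ?_ (fun p _ => mem_range_self _)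
    (σ := fun k x => rangeFactorization _ (t.toOpenPartialHomeomorph.symm (x, k))) ?_ ?_ ?_ ?_ hx
  · intro p hp
    have hpiece := (isOpen_setOf_fst_mem_and_snd_eq hW (t.exists_snd_eq_branch hWt) hbranches
      (t (s p)).2).mem_nhds ⟨hp, hs_branch p hp⟩
    refine ((continuousAt_const (y := κ p)).congr ?_).continuousWithinAt
    filter_upwards [hpiece] with q hq using (hκ_eq q hq.1 _ hq.2).symm
  · exact fun k _ => hh.comp_continuousOn (t.continuousOn_symm_prodMk_left.mono hWt)
  · exact fun k _ x hx => t.proj_symm_apply' (hWt hx)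
  · rintro _ ⟨q, rfl⟩ x hx
    have hσ := t.coe_rangeFactorization_symm (g := g) (hWt hx) q.out
    rw [hκ_eq _ (by rw [hσ]; exact hx) _ (by rw [hσ]), Quotient.out_eq]
  · intro p hp
    refine Subtype.ext ((t.coe_rangeFactorization_symm (hWt hp) _).trans (Prod.ext rfl ?_))
    exact (Quotient.mk_out (s := r) _ hp).trans (hs_branch p hp).symm

theorem isCoveringMapOn_rangeFactorization [TopologicalSpace Y] [Finite ι] [DiscreteTopology ι]
    (hc : Continuous c) (hg : Continuous g) (hW : IsOpen W) (hWt : W ⊆ t.baseSet)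
    (hbranches : ∀ k l, EqOnOrApartOn (t.branch g k) (t.branch g l) W) :
    IsCoveringMapOn (rangeFactorization fun s => (c s, g s))
      ((fun p : range (fun s => (c s, g s)) => (p : X × Y).1) ⁻¹' W) := by
  rintro p₀ (hp₀ : p₀.1.1 ∈ W)
  obtain ⟨k₀, hk₀⟩ := t.exists_snd_eq_branch hWt p₀.1 p₀.2 hp₀
  refine IsEvenlyCovered.of_sections ((hc.prodMk hg).subtype_mk _)
    (isOpen_setOf_fst_mem_and_snd_eq hW (t.exists_snd_eq_branch hWt) hbranches k₀)
    (I := {k | EqOn (t.branch g k) (t.branch g k₀) W}) (κ := fun s => (t s).2) ?_ ?_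
    (σ := fun k p => t.toOpenPartialHomeomorph.symm (p.1.1, k)) ?_ ?_ ?_ ?_ ⟨hp₀, hk₀⟩
  · refine (continuous_snd.comp_continuousOn t.toOpenPartialHomeomorph.continuousOn).mono
      fun s hs => ?_
    exact t.mem_source.mpr (hWt hs.1)
  · intro s hs
    exact (hbranches _ _).eqOn_of_eq hs.1 ((t.apply_eq_branch (hWt hs.1)).symm.trans hs.2)
  · exact fun k _ => t.continuousOn_symm_prodMk_left.comp
      (continuous_fst.comp continuous_subtype_val).continuousOn fun p hp => hWt hp.1
  · exact fun k hk p hp => Subtype.ext ((t.coe_rangeFactorization_symm (hWt hp.1) k).trans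
      (Prod.ext rfl ((hk hp.1).trans hp.2.symm)))
  · exact fun k _ p hp => congrArg Prod.snd (t.apply_symm_apply' (hWt hp.1))
  · exact fun s hs => t.symm_apply_mk_proj (t.mem_source.mpr (hWt hs.1))

end Bundle.Trivialization

theorem exists_isOpen_subset_isCoveringMapOn_range {S X Y : Type*} (H : Type*) [TopologicalSpace S]
    [TopologicalSpace X] [TopologicalSpace Y] [TopologicalSpace H] [T2Space H] [ChartedSpace H Y]
    {c : S → X} {g : S → Y} (hc : IsCoveringMap c) (hcfin : ∀ x, (c ⁻¹' {x}).Finite)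
    (hg : Continuous g) {V : Set X} (hV : IsOpen V) (hne : V.Nonempty) :
    ∃ W ⊆ V, W.Nonempty ∧ IsOpen W ∧
      IsCoveringMapOn (fun p : range (fun s => (c s, g s)) => (p : X × Y).1) W ∧
      IsCoveringMapOn (rangeFactorization fun s => (c s, g s))
        ((fun p : range (fun s => (c s, g s)) => (p : X × Y).1) ⁻¹' W) := by
  by_cases hVc : (V ∩ range c).Nonempty
  · obtain ⟨_, hxV, s, rfl⟩ := hVc
    have := (hcfin (c s)).to_subtype
    have := (hc (c s)).1
    have : Nonempty (c ⁻¹' {c s}) := ⟨⟨s, rfl⟩⟩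
    let t := (hc (c s)).toTrivialization
    obtain ⟨W, hWV, hWo, hWne, hbranches⟩ := exists_isOpen_subset_pairwise_eqOnOrApartOn H
      (hV.inter t.open_baseSet) ⟨c s, hxV, (hc (c s)).mem_toTrivialization_baseSet⟩
      fun k => (t.continuousOn_branch hg k).mono inter_subset_right
    have hWt : W ⊆ t.baseSet := hWV.trans inter_subset_right
    exact ⟨W, hWV.trans inter_subset_left, hWne, hWo,
      t.isCoveringMapOn_fst_range hc.continuous hg hWo hWt hbranches,
      t.isCoveringMapOn_rangeFactorization hc.continuous hg hWo hWt hbranches⟩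
  · have hempty : (fun p : range (fun s => (c s, g s)) => (p : X × Y).1) ⁻¹' V = ∅ := by
      refine eq_empty_of_forall_notMem ?_
      rintro ⟨_, s, rfl⟩ hs
      exact hVc ⟨c s, hs, s, rfl⟩
    refine ⟨V, subset_rfl, hne, hV, .of_preimage_eq_empty hV hempty, ?_⟩
    rw [hempty]
    exact fun _ h => h.elim

theorem surrogate_generically_covers_general
    {n m : ℕ} {S X Y : Type*}
    [TopologicalSpace S] [ChartedSpace (EuclideanSpace ℝ (Fin n)) S]
    [TopologicalSpace X]
    [TopologicalSpace Y] [ChartedSpace (EuclideanSpace ℂ (Fin m)) Y]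
    (c : S → X) (hc : IsCoveringMap c) (hcfin : ∀ x : X, (c ⁻¹' {x}).Finite)
    (g : S → Y) (hg : ContMDiff (𝓡 n) (𝓘(ℝ, EuclideanSpace ℂ (Fin m))) (⊤ : ℕ∞) g) :
    ∃ U : Set X, IsOpen U ∧ Dense U ∧ Dense (c ⁻¹' U) ∧
      IsCoveringMapOn
        (fun p : Set.range (fun s : S => (c s, g s)) => (p : X × Y).1) U ∧
      IsCoveringMapOn
        (fun s : S => (⟨(c s, g s), Set.mem_range_self s⟩ :
          Set.range (fun s : S => (c s, g s))))
        ((fun p : Set.range (fun s : S => (c s, g s)) => (p : X × Y).1) ⁻¹' U) := by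
  let good : Set (Set X) := {W | IsOpen W ∧
    IsCoveringMapOn (fun p : range (fun s => (c s, g s)) => (p : X × Y).1) W ∧
    IsCoveringMapOn (rangeFactorization fun s => (c s, g s))
      ((fun p : range (fun s => (c s, g s)) => (p : X × Y).1) ⁻¹' W)}
  have hdense : Dense (⋃₀ good) := dense_iff_inter_open.mpr fun V hV hne => by
    obtain ⟨W, hWV, ⟨x, hx⟩, hW⟩ := exists_isOpen_subset_isCoveringMapOn_range
      (EuclideanSpace ℂ (Fin m)) hc hcfin hg.continuous hV hne
    exact ⟨x, hWV hx, W, hW, hx⟩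
  refine ⟨⋃₀ good, isOpen_sUnion fun W hW => hW.1, hdense, hdense.preimage hc.isOpenMap, ?_, ?_⟩
  · rintro x ⟨W, hW, hxW⟩
    exact hW.2.1 x hxW
  · rintro p ⟨W, hW, hpW⟩
    exact hW.2.2 p hpW

/-- Let `c : S → X` be a finite covering map of smooth `n`-manifolds and `g : S → Y` a
smooth map to a complex manifold `Y`.  Let `X_φ := (c,g)(S) ⊆ X × Y` be the surrogate,
with induced maps `h : S → X_φ`, `h(s) = (c(s), g(s))`, and `π : X_φ → X` the
restriction of the first projection.  Then there is a dense open subset `U ⊆ X` such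
that `c⁻¹(U)` is dense (and open) in `S` and both `π` (over `U`) and `h` (over
`π⁻¹(U)`) restrict to covering maps. -/
theorem surrogate_generically_covers
    {n m : ℕ} {S X Y : Type*}
    [TopologicalSpace S] [ChartedSpace (EuclideanSpace ℝ (Fin n)) S]
    [IsManifold (𝓡 n) (⊤ : ℕ∞) S]
    [TopologicalSpace X] [ChartedSpace (EuclideanSpace ℝ (Fin n)) X]
    [IsManifold (𝓡 n) (⊤ : ℕ∞) X]
    [TopologicalSpace Y] [ChartedSpace (EuclideanSpace ℂ (Fin m)) Y]
    [IsManifold (𝓘(ℝ, EuclideanSpace ℂ (Fin m))) (⊤ : ℕ∞) Y]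
    (c : S → X) (hc : IsCoveringMap c) (hcfin : ∀ x : X, (c ⁻¹' {x}).Finite)
    (hcsmooth : ContMDiff (𝓡 n) (𝓡 n) (⊤ : ℕ∞) c)
    (g : S → Y) (hg : ContMDiff (𝓡 n) (𝓘(ℝ, EuclideanSpace ℂ (Fin m))) (⊤ : ℕ∞) g) :
    ∃ U : Set X, IsOpen U ∧ Dense U ∧ Dense (c ⁻¹' U) ∧
      IsCoveringMapOn
        (fun p : Set.range (fun s : S => (c s, g s)) => (p : X × Y).1) U ∧
      IsCoveringMapOn
        (fun s : S => (⟨(c s, g s), Set.mem_range_self s⟩ :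
          Set.range (fun s : S => (c s, g s))))
        ((fun p : Set.range (fun s : S => (c s, g s)) => (p : X × Y).1) ⁻¹' U) :=
  surrogate_generically_covers_general c hc hcfin g hg
end
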